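/- arXiv:2001.03736 — 5 statements merged into one kernel-verified Lean document; each statement's English description precedes it below -/
import Mathlib

section
/- If m and n are positive integers with φ(m²) = φ(n²), then m = n. (The function n ↦ φ(n²) is injective on positive integers.) -/
/-!
Since `φ (m ^ 2) = ∏ p ^ (2 a - 1) (p - 1)` over the prime powers `p ^ a ∥ m`, every prime factor of
`φ (m ^ 2)` is at most a prime factor of `m`, and every prime factor of `m` divides `φ (m ^ 2)`.
So the largest prime `p` dividing `φ (m ^ 2) = φ (n ^ 2)` is the largest prime factor of both `m`
and `n`, and it divides neither `p - 1` nor `φ` of the square of the `p`-free parts. Comparing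
`p`-adic valuations gives `2 v_p(m) - 1 = 2 v_p(n) - 1`, and what remains is the same equation for
the `p`-free parts of `m` and `n`, which are smaller.
-/

namespace Nat

theorem exists_prime_dvd_le_of_dvd_totient {q n : ℕ} (hq : q.Prime) (h : q ∣ φ n) :
    ∃ r, r.Prime ∧ r ∣ n ∧ q ≤ r := by
  rcases eq_or_ne n 0 with rfl | hn
  · exact ⟨q, hq, dvd_zero q, le_rfl⟩
  rw [totient_eq_prod_factorization hn, Prime.dvd_finsuppProd_iff hq.prime] at h
  obtain ⟨r, hr, hqr⟩ := h
  have hr' : r.Prime := prime_of_mem_primeFactors hr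
  refine ⟨r, hr', dvd_of_mem_primeFactors hr, ?_⟩
  rcases hq.dvd_mul.1 hqr with hqr | hqr
  · exact le_of_eq ((prime_dvd_prime_iff_eq hq hr').1 (hq.dvd_of_dvd_pow hqr))
  · exact (le_of_dvd (Nat.sub_pos_of_lt hr'.one_lt) hqr).trans (Nat.sub_le r 1)

theorem Prime.dvd_totient_sq_of_dvd {p m : ℕ} (hp : p.Prime) (h : p ∣ m) : p ∣ φ (m ^ 2) := by
  have hpp : φ (p ^ 2) = p * (p - 1) := by
    rw [totient_prime_pow hp two_pos]; ring
  exact (Dvd.intro _ hpp.symm).trans (totient_dvd_of_dvd (pow_dvd_pow_of_dvd h 2))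

theorem exists_isGreatest_prime_dvd {N : ℕ} (hN : 1 < N) :
    ∃ p, IsGreatest {q | q.Prime ∧ q ∣ N} p := by
  obtain ⟨p, hp, hmax⟩ := N.primeFactors.exists_max_image id (nonempty_primeFactors.2 hN)
  exact ⟨p, ⟨prime_of_mem_primeFactors hp, dvd_of_mem_primeFactors hp⟩,
    fun q ⟨hq, hqN⟩ => hmax q (mem_primeFactors.2 ⟨hq, hqN, by omega⟩)⟩

theorem dvd_of_isGreatest_prime_dvd_totient_sq {p k m : ℕ}
    (hp : IsGreatest {q | q.Prime ∧ q ∣ φ (m ^ 2)} p) (hkm : k ∣ m) (hpk : p ∣ φ (k ^ 2)) :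
    p ∣ k := by
  obtain ⟨r, hr, hrk, hpr⟩ := exists_prime_dvd_le_of_dvd_totient hp.1.1 hpk
  have hrk : r ∣ k := hr.dvd_of_dvd_pow hrk
  have hrp : r ≤ p := hp.2 ⟨hr, hr.dvd_totient_sq_of_dvd (hrk.trans hkm)⟩
  exact le_antisymm hrp hpr ▸ hrk

theorem not_dvd_sub_one_mul_totient_sq_ordCompl {p m : ℕ}
    (hp : IsGreatest {q | q.Prime ∧ q ∣ φ (m ^ 2)} p) (hm : m ≠ 0) :
    ¬p ∣ (p - 1) * φ ((ordCompl[p] m) ^ 2) := by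
  have hpp := hp.1.1
  intro h
  rcases hpp.dvd_mul.1 h with h | h
  · exact Nat.not_dvd_of_pos_of_lt (Nat.sub_pos_of_lt hpp.one_lt) (Nat.sub_lt hpp.pos one_pos) h
  · exact not_dvd_ordCompl hpp hm (dvd_of_isGreatest_prime_dvd_totient_sq hp (ordCompl_dvd m p) h)

theorem totient_sq_eq_pow_mul {p m : ℕ} (hp : p.Prime) (hpm : p ∣ m) (hm : m ≠ 0) :
    φ (m ^ 2) = p ^ (2 * m.factorization p - 1) * ((p - 1) * φ ((ordCompl[p] m) ^ 2)) := by
  have ha : 0 < m.factorization p := hp.factorization_pos_of_dvd hm hpm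
  have hcop : Coprime (p ^ (2 * m.factorization p)) (ordCompl[p] m ^ 2) :=
    Coprime.pow _ _ (hp.coprime_iff_not_dvd.2 (not_dvd_ordCompl hp hm))
  conv_lhs => rw [← ordProj_mul_ordCompl_eq_self m p]
  rw [mul_pow, ← pow_mul, mul_comm _ 2, totient_mul hcop, totient_prime_pow hp (by omega)]
  ring

theorem Prime.eq_and_eq_of_pow_mul_eq_pow_mul {p s t x y : ℕ} (hp : p.Prime) (hx : ¬p ∣ x)
    (hy : ¬p ∣ y) (h : p ^ s * x = p ^ t * y) : s = t ∧ x = y := by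
  have hxy : x = y := by
    simpa [ordCompl_pow_mul_of_not_dvd _ hp hx, ordCompl_pow_mul_of_not_dvd _ hp hy]
      using congrArg (ordCompl[p] ·) h
  subst hxy
  have hx0 : 0 < x := Nat.pos_of_ne_zero (by rintro rfl; exact hx (dvd_zero p))
  exact ⟨Nat.pow_right_injective hp.two_le (Nat.eq_of_mul_eq_mul_right hx0 h), rfl⟩

theorem ordCompl_lt_self {p m : ℕ} (hp : p.Prime) (hpm : p ∣ m) (hm : m ≠ 0) :
    ordCompl[p] m < m :=
  Nat.div_lt_self (Nat.pos_of_ne_zero hm)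
    (Nat.one_lt_pow (hp.factorization_pos_of_dvd hm hpm).ne' hp.one_lt)

theorem totient_sq_eq_one_iff {m : ℕ} : φ (m ^ 2) = 1 ↔ m = 1 := by
  refine ⟨fun h => ?_, fun h => by simp [h]⟩
  rcases totient_eq_one_iff.1 h with h | h
  · simpa using h
  · have : m ≤ 1 := by nlinarith
    interval_cases m <;> simp_all

theorem totient_sq_injective : Function.Injective fun n : ℕ => φ (n ^ 2) := by
  intro m
  induction m using Nat.strong_induction_on with
  | _ m ih =>
  intro n (h : φ (m ^ 2) = φ (n ^ 2))
  rcases Nat.lt_or_ge (φ (m ^ 2)) 2 with hN | hN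
  · interval_cases hN1 : φ (m ^ 2)
    · simp_all [eq_comm (a := 0)]
    · rw [totient_sq_eq_one_iff.1 hN1, totient_sq_eq_one_iff.1 h.symm]
  have hm : m ≠ 0 := by rintro rfl; simp at hN
  have hn : n ≠ 0 := by rintro rfl; simp [h] at hN
  obtain ⟨p, hpm_max⟩ := exists_isGreatest_prime_dvd hN
  have hpn_max : IsGreatest {q | q.Prime ∧ q ∣ φ (n ^ 2)} p := h ▸ hpm_max
  have hpp : p.Prime := hpm_max.1.1
  have hpm : p ∣ m := dvd_of_isGreatest_prime_dvd_totient_sq hpm_max dvd_rfl hpm_max.1.2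
  have hpn : p ∣ n := dvd_of_isGreatest_prime_dvd_totient_sq hpn_max dvd_rfl hpn_max.1.2
  obtain ⟨hexp, hcompl⟩ := hpp.eq_and_eq_of_pow_mul_eq_pow_mul
    (not_dvd_sub_one_mul_totient_sq_ordCompl hpm_max hm)
    (not_dvd_sub_one_mul_totient_sq_ordCompl hpn_max hn) <| by
    rw [← totient_sq_eq_pow_mul hpp hpm hm, ← totient_sq_eq_pow_mul hpp hpn hn, h]
  have hcompl : ordCompl[p] m = ordCompl[p] n :=
    ih _ (ordCompl_lt_self hpp hpm hm)
      (Nat.eq_of_mul_eq_mul_left (Nat.sub_pos_of_lt hpp.one_lt) hcompl)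
  have hexp : m.factorization p = n.factorization p := by
    have := hpp.factorization_pos_of_dvd hm hpm
    have := hpp.factorization_pos_of_dvd hn hpn
    omega
  rw [← ordProj_mul_ordCompl_eq_self m p, ← ordProj_mul_ordCompl_eq_self n p, hcompl, hexp]

end Nat

theorem stmt1_general (m n : ℕ)
    (h : Nat.totient (m ^ 2) = Nat.totient (n ^ 2)) : m = n :=
  Nat.totient_sq_injective h

theorem stmt1 (m n : ℕ) (hm : 0 < m) (hn : 0 < n)
    (h : Nat.totient (m ^ 2) = Nat.totient (n ^ 2)) : m = n :=
  stmt1_general m n h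
end

section
/- Every positive rational number q can be written as φ(m²)/φ(n²) for some positive integers m and n, where φ is Euler's totient function. -/
/-!
Since `φ(m²) = m φ(m)`, for a prime `p` not dividing `m` one has
`φ((p^(k+1) m)²) = p^(2k+1) (p - 1) φ(m²)`. By induction over the primes, every quotient of
`N`-smooth numbers is a quotient `φ(m²)/φ(n²)` with `m, n` also `N`-smooth: to adjoin the prime
`p`, an even power `p^(2k)` is gained by multiplying `m` by `p^(k+1)` and `n` by `p`, and an odd
power `p^(2k+1)` by multiplying `m` by `p^(k+1)` after first realizing the quotient divided by the
(`p`-smooth) number `p - 1`.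
-/

open Nat

theorem totient_sq_prime_pow_succ_mul {p m : ℕ} (hp : p.Prime) (hpm : Coprime p m) (k : ℕ) :
    φ ((p ^ (k + 1) * m) ^ 2) = p ^ (2 * k + 1) * (p - 1) * φ (m ^ 2) := by
  rw [mul_pow, ← pow_mul, totient_mul (hpm.pow _ _), show (k + 1) * 2 = 2 * k + 1 + 1 by ring,
    totient_prime_pow_succ hp]

def totientSqRatios (N : ℕ) : Set ℚ :=
  {x | ∃ m ∈ N.smoothNumbers, ∃ n ∈ N.smoothNumbers, x = φ (m ^ 2) / φ (n ^ 2)}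

theorem inv_mem_totientSqRatios {N : ℕ} {x : ℚ} (hx : x ∈ totientSqRatios N) :
    x⁻¹ ∈ totientSqRatios N := by
  obtain ⟨m, hm, n, hn, rfl⟩ := hx
  exact ⟨n, hn, m, hm, inv_div _ _⟩

theorem prime_pow_even_mul_mem_totientSqRatios {p : ℕ} (hp : p.Prime) {x : ℚ}
    (hx : x ∈ totientSqRatios p) (k : ℕ) :
    p ^ (2 * k) * x ∈ totientSqRatios (p + 1) := by
  obtain ⟨m, hm, n, hn, rfl⟩ := hx
  refine ⟨p ^ (k + 1) * m, pow_mul_mem_smoothNumbers hp.ne_zero _ hm,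
    p ^ 1 * n, pow_mul_mem_smoothNumbers hp.ne_zero _ hn, ?_⟩
  have hp0 : (p : ℚ) ≠ 0 := cast_ne_zero.mpr hp.ne_zero
  have hp1 : ((p - 1 : ℕ) : ℚ) ≠ 0 := cast_ne_zero.mpr (Nat.sub_ne_zero_of_lt hp.one_lt)
  rw [totient_sq_prime_pow_succ_mul hp (hp.smoothNumbers_coprime hm),
    totient_sq_prime_pow_succ_mul hp (hp.smoothNumbers_coprime hn)]
  push_cast
  field_simp
  ring

theorem prime_pow_odd_mul_mem_totientSqRatios {p : ℕ} (hp : p.Prime) {x : ℚ}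
    (hx : x ∈ totientSqRatios p) (k : ℕ) :
    p ^ (2 * k + 1) * (p - 1 : ℕ) * x ∈ totientSqRatios (p + 1) := by
  obtain ⟨m, hm, n, hn, rfl⟩ := hx
  refine ⟨p ^ (k + 1) * m, pow_mul_mem_smoothNumbers hp.ne_zero _ hm,
    n, smoothNumbers_mono (le_succ p) hn, ?_⟩
  rw [totient_sq_prime_pow_succ_mul hp (hp.smoothNumbers_coprime hm)]
  push_cast
  ring

theorem prime_pow_mul_div_mem_totientSqRatios {p : ℕ} (hp : p.Prime)
    (ih : ∀ a ∈ p.smoothNumbers, ∀ b ∈ p.smoothNumbers, (a / b : ℚ) ∈ totientSqRatios p)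
    {a b : ℕ} (ha : a ∈ p.smoothNumbers) (hb : b ∈ p.smoothNumbers) (e : ℕ) :
    p ^ e * (a / b : ℚ) ∈ totientSqRatios (p + 1) := by
  obtain ⟨k, rfl | rfl⟩ := e.even_or_odd'
  · exact prime_pow_even_mul_mem_totientSqRatios hp (ih a ha b hb) k
  · have hp1 : p - 1 ∈ p.smoothNumbers :=
      mem_smoothNumbers_of_lt (Nat.sub_pos_of_lt hp.one_lt) (sub_one_lt hp.ne_zero)
    have hp1' : ((p - 1 : ℕ) : ℚ) ≠ 0 := cast_ne_zero.mpr (Nat.sub_ne_zero_of_lt hp.one_lt)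
    convert prime_pow_odd_mul_mem_totientSqRatios hp
      (ih a ha _ (mul_mem_smoothNumbers hb hp1)) k using 1
    push_cast
    field_simp

theorem exists_eq_pow_mul_of_mem_smoothNumbers_succ {p x : ℕ} (hp : p.Prime)
    (hx : x ∈ (p + 1).smoothNumbers) : ∃ e, ∃ y ∈ p.smoothNumbers, x = p ^ e * y := by
  obtain ⟨⟨e, y, hy⟩, hxy⟩ := (equivProdNatSmoothNumbers hp).surjective ⟨x, hx⟩
  exact ⟨e, y, hy, by simpa using (congrArg Subtype.val hxy).symm⟩

theorem div_mem_totientSqRatios (N : ℕ) {a b : ℕ} (ha : a ∈ N.smoothNumbers)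
    (hb : b ∈ N.smoothNumbers) : (a / b : ℚ) ∈ totientSqRatios N := by
  induction N generalizing a b with
  | zero =>
    simp only [smoothNumbers_zero, Set.mem_singleton_iff] at ha hb
    subst ha hb
    exact ⟨1, by simp, 1, by simp, by simp⟩
  | succ p ih =>
    by_cases hp : p.Prime
    · have shift {a b : ℕ} (ha : a ∈ p.smoothNumbers) (hb : b ∈ p.smoothNumbers)
          (j e : ℕ) :
          ((p ^ (j + e) * a : ℕ) / (p ^ j * b : ℕ) : ℚ) ∈ totientSqRatios (p + 1) := by
        have hp0 : (p : ℚ) ≠ 0 := cast_ne_zero.mpr hp.ne_zero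
        convert prime_pow_mul_div_mem_totientSqRatios hp (fun a ha b hb ↦ ih ha hb) ha hb e
          using 1
        push_cast
        field_simp
        ring
      obtain ⟨i, a', ha', rfl⟩ := exists_eq_pow_mul_of_mem_smoothNumbers_succ hp ha
      obtain ⟨j, b', hb', rfl⟩ := exists_eq_pow_mul_of_mem_smoothNumbers_succ hp hb
      rcases le_total j i with hji | hij
      · obtain ⟨e, rfl⟩ := exists_add_of_le hji
        exact shift ha' hb' j e
      · obtain ⟨e, rfl⟩ := exists_add_of_le hij
        simpa using inv_mem_totientSqRatios (shift hb' ha' i e)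
    · rw [smoothNumbers_succ hp] at ha hb
      rw [totientSqRatios, smoothNumbers_succ hp]
      exact ih ha hb

theorem stmt2 (q : ℚ) (hq : 0 < q) :
    ∃ m n : ℕ, 0 < m ∧ 0 < n ∧
      q = (Nat.totient (m ^ 2) : ℚ) / (Nat.totient (n ^ 2) : ℚ) := by
  have hnum : 0 < q.num := Rat.num_pos.mpr hq
  have hq_eq : q = (q.num.toNat / q.den : ℚ) := by
    rw [show ((q.num.toNat : ℕ) : ℚ) = q.num by exact_mod_cast Int.toNat_of_nonneg hnum.le,
      Rat.num_div_den]
  obtain ⟨m, hm, n, hn, hmn⟩ := div_mem_totientSqRatios (q.num.toNat + q.den + 1)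
    (mem_smoothNumbers_of_lt (m := q.num.toNat) (by omega) (by omega))
    (mem_smoothNumbers_of_lt (m := q.den) q.pos (by omega))
  exact ⟨m, n, pos_of_ne_zero hm.1, pos_of_ne_zero hn.1, hq_eq.trans hmn⟩
end

section
/- Let p be a prime. If a positive rational q can be written as φ(m₀²)/φ(n₀²) with m₀n₀ having no prime factor ≥ p, then for any integer a, the rational q·p^{2a} can be written as φ(m²)/φ(n²) with mn having no prime factor > p. -/
/-!
Since `p` is coprime to `m₀` and `n₀`, replacing them by `m₀ p ^ (e + 1)` and `n₀ p ^ (k + 1)`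
multiplies `φ(m₀²)` and `φ(n₀²)` by `p ^ (2e + 1) (p - 1)` and `p ^ (2k + 1) (p - 1)`, so the
quotient gains the factor `p ^ (2(e - k))`. Taking `e - k = a` gives `q p ^ (2a)`, and the only
new prime factor is `p` itself.
-/

lemma totient_sq_mul_prime_pow_succ {p m : ℕ} (hp : p.Prime) (hpm : ¬ p ∣ m) (e : ℕ) :
    ((m * p ^ (e + 1)) ^ 2).totient = (m ^ 2).totient * (p ^ (2 * e + 1) * (p - 1)) := by
  have hcop : Nat.Coprime (m ^ 2) (p ^ (2 * e + 2)) :=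
    ((hp.coprime_iff_not_dvd.mpr hpm).symm).pow _ _
  rw [mul_pow, ← pow_mul, show (e + 1) * 2 = 2 * e + 2 by ring, Nat.totient_mul hcop,
    Nat.totient_prime_pow_succ hp]

lemma zpow_two_mul_eq_div {K : Type*} [DivisionRing K] {x : K} (hx : x ≠ 0) (a : ℤ) :
    x ^ (2 * a) = x ^ (2 * a.toNat + 1) / x ^ (2 * (-a).toNat + 1) := by
  rw [eq_div_iff (pow_ne_zero _ hx), ← zpow_natCast, ← zpow_natCast, ← zpow_add₀ hx]
  congr 1
  push_cast
  omega

lemma Nat.Prime.dvd_or_eq_of_dvd_mul_pow {p r n : ℕ} (hp : p.Prime) (hr : r.Prime) (i : ℕ)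
    (h : r ∣ n * p ^ i) : r ∣ n ∨ r = p :=
  (hr.dvd_mul.mp h).imp_right fun h => (Nat.prime_dvd_prime_iff_eq hr hp).mp (hr.dvd_of_dvd_pow h)

theorem stmt5_general (p : ℕ) (hp : p.Prime) (q : ℚ)
    (m₀ n₀ : ℕ) (hm₀ : 0 < m₀) (hn₀ : 0 < n₀)
    (hfac : ∀ r : ℕ, r.Prime → r ∣ m₀ * n₀ → r < p)
    (hrep : q = (Nat.totient (m₀ ^ 2) : ℚ) / (Nat.totient (n₀ ^ 2) : ℚ))
    (a : ℤ) :
    ∃ m n : ℕ, 0 < m ∧ 0 < n ∧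
      q * (p : ℚ) ^ (2 * a) =
        (Nat.totient (m ^ 2) : ℚ) / (Nat.totient (n ^ 2) : ℚ) ∧
      ∀ r : ℕ, r.Prime → r ∣ m * n → r ≤ p := by
  have hpm : ¬ p ∣ m₀ := fun h => (hfac p hp (h.mul_right n₀)).false
  have hpn : ¬ p ∣ n₀ := fun h => (hfac p hp (h.mul_left m₀)).false
  set e := a.toNat
  set k := (-a).toNat
  refine ⟨m₀ * p ^ (e + 1), n₀ * p ^ (k + 1), Nat.mul_pos hm₀ (pow_pos hp.pos _),
    Nat.mul_pos hn₀ (pow_pos hp.pos _), ?_, ?_⟩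
  · have hp1 : ((p - 1 : ℕ) : ℚ) ≠ 0 := by exact_mod_cast (Nat.sub_pos_of_lt hp.one_lt).ne'
    rw [hrep, zpow_two_mul_eq_div (by exact_mod_cast hp.ne_zero),
      totient_sq_mul_prime_pow_succ hp hpm, totient_sq_mul_prime_pow_succ hp hpn]
    push_cast
    rw [mul_div_mul_comm, mul_div_mul_right _ _ hp1]
  · intro r hr hdvd
    have hmn : m₀ * p ^ (e + 1) * (n₀ * p ^ (k + 1)) = m₀ * n₀ * p ^ (e + k + 2) := by ring
    rw [hmn] at hdvd
    rcases hp.dvd_or_eq_of_dvd_mul_pow hr _ hdvd with h | rfl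
    exacts [(hfac r hr h).le, le_rfl]

theorem stmt5 (p : ℕ) (hp : p.Prime) (q : ℚ) (hq : 0 < q)
    (m₀ n₀ : ℕ) (hm₀ : 0 < m₀) (hn₀ : 0 < n₀)
    (hfac : ∀ r : ℕ, r.Prime → r ∣ m₀ * n₀ → r < p)
    (hrep : q = (Nat.totient (m₀ ^ 2) : ℚ) / (Nat.totient (n₀ ^ 2) : ℚ))
    (a : ℤ) :
    ∃ m n : ℕ, 0 < m ∧ 0 < n ∧
      q * (p : ℚ) ^ (2 * a) =
        (Nat.totient (m ^ 2) : ℚ) / (Nat.totient (n ^ 2) : ℚ) ∧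
      ∀ r : ℕ, r.Prime → r ∣ m * n → r ≤ p :=
  stmt5_general p hp q m₀ n₀ hm₀ hn₀ hfac hrep a
end

section
/- For every rational number r > 0 and every prime p such that all primes dividing the numerator or denominator of r are at most p, there exist positive integers m and n such that r = φ(m²)/φ(n²) and every prime factor of m·n is at most p. -/
/-!
Induct on the smoothness bound, proving that `a * φ (n ^ 2) = b * φ (m ^ 2)` is solvable in smooth
`m, n` for all smooth `a, b`. At the largest prime `p`, write `a = p ^ α * a₀` and
`b = p ^ β * b₀`. Since `φ ((p ^ (k + 1)) ^ 2) = p ^ (2 * k + 1) * (p - 1)`, a suitable choice of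
`i, j` makes `p ^ α * φ ((p ^ j) ^ 2)` and `p ^ β * φ ((p ^ i) ^ 2)` agree up to divisors of
`p - 1`. These only involve smaller primes, so they are absorbed into `a₀, b₀` and the induction
hypothesis applies; the factors `p ^ i`, `p ^ j` are coprime to the rest, so `φ` splits.
-/

open scoped Nat

lemma totient_sq_prime_pow_succ {p : ℕ} (hp : p.Prime) (k : ℕ) :
    φ ((p ^ (k + 1)) ^ 2) = p ^ (2 * k + 1) * (p - 1) := by
  rw [← pow_mul, show (k + 1) * 2 = 2 * k + 1 + 1 by ring, Nat.totient_prime_pow_succ hp]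

lemma exists_pow_mul_totient_sq_mul_eq {p : ℕ} (hp : p.Prime) (d : ℕ) :
    ∃ i j Y : ℕ, Y ∣ p - 1 ∧ p ^ d * φ ((p ^ j) ^ 2) * Y = φ ((p ^ i) ^ 2) := by
  obtain ⟨k, rfl | rfl⟩ := Nat.even_or_odd' d
  · refine ⟨k + 1, 1, 1, one_dvd _, ?_⟩
    rw [totient_sq_prime_pow_succ hp, ← zero_add 1, totient_sq_prime_pow_succ hp]
    ring
  · refine ⟨k + 1, 0, p - 1, dvd_rfl, ?_⟩
    rw [totient_sq_prime_pow_succ hp]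
    simp

lemma exists_pow_mul_totient_sq_mul_eq_pow_mul {p : ℕ} (hp : p.Prime) (α β : ℕ) :
    ∃ i j X Y : ℕ, X ∣ p - 1 ∧ Y ∣ p - 1 ∧
      p ^ α * φ ((p ^ j) ^ 2) * Y = p ^ β * φ ((p ^ i) ^ 2) * X := by
  rcases le_total β α with h | h
  · obtain ⟨i, j, Y, hY, hd⟩ := exists_pow_mul_totient_sq_mul_eq hp (α - β)
    refine ⟨i, j, 1, Y, one_dvd _, hY, ?_⟩
    rw [← hd, ← Nat.sub_add_cancel h, pow_add, Nat.add_sub_cancel]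
    ring
  · obtain ⟨i, j, Y, hY, hd⟩ := exists_pow_mul_totient_sq_mul_eq hp (β - α)
    refine ⟨j, i, Y, 1, hY, one_dvd _, ?_⟩
    rw [← hd, ← Nat.sub_add_cancel h, pow_add, Nat.add_sub_cancel]
    ring

lemma totient_sq_prime_pow_mul {p : ℕ} (hp : p.Prime) (e : ℕ) {m : ℕ}
    (hm : m ∈ p.smoothNumbers) : φ ((p ^ e * m) ^ 2) = φ ((p ^ e) ^ 2) * φ (m ^ 2) :=
  Nat.map_prime_pow_mul (f := fun n ↦ φ (n ^ 2))
    (fun h ↦ by simp only [mul_pow, Nat.totient_mul (h.pow 2 2)]) hp e (m := ⟨m, hm⟩)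

lemma exists_pow_mul_eq_of_mem_smoothNumbers_succ {p a : ℕ} (hp : p.Prime)
    (ha : a ∈ (p + 1).smoothNumbers) : ∃ e, ∃ a₀ ∈ p.smoothNumbers, p ^ e * a₀ = a := by
  obtain ⟨⟨e, a₀, ha₀⟩, h⟩ := (Nat.equivProdNatSmoothNumbers hp).surjective ⟨a, ha⟩
  exact ⟨e, a₀, ha₀, congrArg Subtype.val h⟩

lemma exists_mul_totient_sq_eq (N : ℕ) {a b : ℕ} (ha : a ∈ N.smoothNumbers)
    (hb : b ∈ N.smoothNumbers) :
    ∃ m ∈ N.smoothNumbers, ∃ n ∈ N.smoothNumbers, a * φ (n ^ 2) = b * φ (m ^ 2) := by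
  induction N generalizing a b with
  | zero =>
    simp only [Nat.smoothNumbers_zero, Set.mem_singleton_iff] at ha hb ⊢
    exact ⟨1, rfl, 1, rfl, by rw [ha, hb]⟩
  | succ p ih =>
    by_cases hp : p.Prime
    · obtain ⟨α, a₀, ha₀, rfl⟩ := exists_pow_mul_eq_of_mem_smoothNumbers_succ hp ha
      obtain ⟨β, b₀, hb₀, rfl⟩ := exists_pow_mul_eq_of_mem_smoothNumbers_succ hp hb
      obtain ⟨i, j, X, Y, hX, hY, hbal⟩ := exists_pow_mul_totient_sq_mul_eq_pow_mul hp α β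
      have hp1 : p - 1 ∈ p.smoothNumbers :=
        Nat.mem_smoothNumbers_of_lt (by have := hp.two_le; omega) (by have := hp.pos; omega)
      have hXs := Nat.mem_smoothNumbers_of_dvd hp1 hX
      have hYs := Nat.mem_smoothNumbers_of_dvd hp1 hY
      obtain ⟨m, hm, n, hn, heq⟩ :=
        ih (Nat.mul_mem_smoothNumbers ha₀ hXs) (Nat.mul_mem_smoothNumbers hb₀ hYs)
      refine ⟨p ^ i * m, Nat.pow_mul_mem_smoothNumbers hp.ne_zero i hm,
        p ^ j * n, Nat.pow_mul_mem_smoothNumbers hp.ne_zero j hn, ?_⟩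
      rw [totient_sq_prime_pow_mul hp _ hm, totient_sq_prime_pow_mul hp _ hn]
      refine Nat.eq_of_mul_eq_mul_right
        (Nat.pos_of_ne_zero (Nat.mul_mem_smoothNumbers hXs hYs).1) ?_
      calc p ^ α * a₀ * (φ ((p ^ j) ^ 2) * φ (n ^ 2)) * (X * Y)
          = (p ^ α * φ ((p ^ j) ^ 2) * Y) * (a₀ * X * φ (n ^ 2)) := by ring
        _ = (p ^ β * φ ((p ^ i) ^ 2) * X) * (b₀ * Y * φ (m ^ 2)) := by rw [hbal, heq]
        _ = p ^ β * b₀ * (φ ((p ^ i) ^ 2) * φ (m ^ 2)) * (X * Y) := by ring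
    · rw [Nat.smoothNumbers_succ hp] at ha hb ⊢
      exact ih ha hb

theorem stmt7_general (r : ℚ) (hr : 0 < r) (p : ℕ)
    (hfac : ∀ s : ℕ, s.Prime → (s ∣ r.num.natAbs ∨ s ∣ r.den) → s ≤ p) :
    ∃ m n : ℕ, 0 < m ∧ 0 < n ∧
      r = (Nat.totient (m ^ 2) : ℚ) / (Nat.totient (n ^ 2) : ℚ) ∧
      ∀ s : ℕ, s.Prime → s ∣ m * n → s ≤ p := by
  have hsmooth : ∀ {k : ℕ}, (∀ s, s.Prime → s ∣ k → s ≤ p) → k ∈ (p + 1).smoothNumbers :=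
    fun hk ↦ Nat.mem_smoothNumbers'.mpr fun s hs hsk ↦ Nat.lt_succ_of_le (hk s hs hsk)
  obtain ⟨m, hm, n, hn, heq⟩ := exists_mul_totient_sq_eq (p + 1)
    (hsmooth fun s hs h ↦ hfac s hs (.inl h)) (hsmooth fun s hs h ↦ hfac s hs (.inr h))
  refine ⟨m, n, Nat.pos_of_ne_zero hm.1, Nat.pos_of_ne_zero hn.1, ?_, fun s hs hsmn ↦
    Nat.le_of_lt_succ (Nat.mem_smoothNumbers'.mp (Nat.mul_mem_smoothNumbers hm hn) s hs hsmn)⟩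
  have hnum : ((r.num.natAbs : ℕ) : ℚ) = r.num := by
    rw [Nat.cast_natAbs, Int.cast_abs, abs_of_pos (by exact_mod_cast Rat.num_pos.mpr hr)]
  have hφn : (φ (n ^ 2) : ℚ) ≠ 0 := by
    exact_mod_cast (Nat.totient_pos.mpr (pow_pos (Nat.pos_of_ne_zero hn.1) 2)).ne'
  rw [eq_div_iff hφn, ← Rat.num_div_den r, ← hnum, div_mul_eq_mul_div, div_eq_iff (by positivity),
    mul_comm _ (r.den : ℚ)]
  exact_mod_cast heq

theorem stmt7 (r : ℚ) (hr : 0 < r) (p : ℕ) (hp : p.Prime)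
    (hfac : ∀ s : ℕ, s.Prime → (s ∣ r.num.natAbs ∨ s ∣ r.den) → s ≤ p) :
    ∃ m n : ℕ, 0 < m ∧ 0 < n ∧
      r = (Nat.totient (m ^ 2) : ℚ) / (Nat.totient (n ^ 2) : ℚ) ∧
      ∀ s : ℕ, s.Prime → s ∣ m * n → s ≤ p :=
  stmt7_general r hr p hfac
end

section
/- The set {φ(m²)/φ(n²) : m, n ∈ ℕ⁺} equals the set of all positive rationals. -/
/-- The key step: handle the largest prime `ℓ`, assuming `b`'s `ℓ`-adic valuation
is at most `a`'s. -/
lemma stmt12_step (ℓ : ℕ) (hℓ : ℓ.Prime)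
    (H : ∀ a b : ℕ, 0 < a → 0 < b → (∀ p ∈ (a * b).primeFactors, p < ℓ) →
      ∃ m n : ℕ, 0 < m ∧ 0 < n ∧ (∀ p ∈ (m * n).primeFactors, p < ℓ) ∧
        Nat.totient (m ^ 2) * b = Nat.totient (n ^ 2) * a)
    (a b : ℕ) (ha : 0 < a) (hb : 0 < b)
    (hmax : ∀ p ∈ (a * b).primeFactors, p ≤ ℓ)
    (hβα : b.factorization ℓ ≤ a.factorization ℓ) :
    ∃ m n : ℕ, 0 < m ∧ 0 < n ∧ (∀ p ∈ (m * n).primeFactors, p ≤ ℓ) ∧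
      Nat.totient (m ^ 2) * b = Nat.totient (n ^ 2) * a := by
  set α := a.factorization ℓ with hαdef
  set β := b.factorization ℓ with hβdef
  set a₁ := a / ℓ ^ α with ha₁def
  set b₁ := b / ℓ ^ β with hb₁def
  have ha₁pos : 0 < a₁ := Nat.ordCompl_pos ℓ ha.ne'
  have hb₁pos : 0 < b₁ := Nat.ordCompl_pos ℓ hb.ne'
  have ha' : ℓ ^ α * a₁ = a := Nat.ordProj_mul_ordCompl_eq_self a ℓ
  have hb' : ℓ ^ β * b₁ = b := Nat.ordProj_mul_ordCompl_eq_self b ℓ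
  have hnda : ¬ ℓ ∣ a₁ := Nat.not_dvd_ordCompl hℓ ha.ne'
  have hndb : ¬ ℓ ∣ b₁ := Nat.not_dvd_ordCompl hℓ hb.ne'
  have hℓ2 : 2 ≤ ℓ := hℓ.two_le
  -- primes of a₁, b₁, ℓ-1 are < ℓ
  have hsmall : ∀ p : ℕ, p.Prime → (p ∣ a₁ ∨ p ∣ b₁ ∨ p ∣ ℓ - 1) → p < ℓ := by
    intro p pp hd
    rcases hd with hd | hd | hd
    · have hle : p ≤ ℓ := hmax p (Nat.mem_primeFactors.mpr
        ⟨pp, (hd.trans (Nat.ordCompl_dvd a ℓ)).mul_right b, by positivity⟩)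
      rcases lt_or_eq_of_le hle with h | h
      · exact h
      · exact absurd (h ▸ hd) hnda
    · have hle : p ≤ ℓ := hmax p (Nat.mem_primeFactors.mpr
        ⟨pp, ((hd.trans (Nat.ordCompl_dvd b ℓ)).mul_left a), by positivity⟩)
      rcases lt_or_eq_of_le hle with h | h
      · exact h
      · exact absurd (h ▸ hd) hndb
    · have : p ≤ ℓ - 1 := Nat.le_of_dvd (by omega) hd
      omega
  have key : ∀ k : ℕ, ∀ m' n' : ℕ, 0 < m' → 0 < n' →
      (∀ p ∈ (m' * n').primeFactors, p < ℓ) →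
      (∀ p ∈ ((ℓ ^ k * m') * n').primeFactors, p ≤ ℓ) := by
    intro k m' n' hm' hn' hpr p hp
    obtain ⟨pp, pd, -⟩ := Nat.mem_primeFactors.mp hp
    have hpd : p ∣ ℓ ^ k * (m' * n') := by
      have h2 : (ℓ ^ k * m') * n' = ℓ ^ k * (m' * n') := by ring
      rwa [h2] at pd
    rcases (Nat.Prime.dvd_mul pp).mp hpd with h | h
    · exact le_of_eq ((Nat.prime_dvd_prime_iff_eq pp hℓ).mp (pp.dvd_of_dvd_pow h))
    · exact (hpr p (Nat.mem_primeFactors.mpr ⟨pp, h, by positivity⟩)).le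
  have hcop : ∀ m' : ℕ, ¬ ℓ ∣ m' → ∀ j : ℕ, Nat.Coprime (ℓ ^ j) (m' ^ 2) :=
    fun m' hnd j => Nat.Coprime.pow _ _ ((hℓ.coprime_iff_not_dvd).mpr hnd)
  have htot : ∀ j : ℕ, Nat.totient (ℓ ^ (2 * j + 2)) = ℓ ^ (2 * j + 1) * (ℓ - 1) := by
    intro j
    rw [Nat.totient_prime_pow hℓ (by omega), show 2 * j + 2 - 1 = 2 * j + 1 from by omega]
  set e := α - β with hedef
  have hαe : α = β + e := by omega
  rcases Nat.even_or_odd e with ⟨k, hk⟩ | ⟨k, hk⟩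
  · -- e = 2k : take m = ℓ^(k+1) m', n = ℓ n'
    obtain ⟨m', n', hm', hn', hpr, heq⟩ := H a₁ b₁ ha₁pos hb₁pos
      (fun p hp => by
        obtain ⟨pp, pd, -⟩ := Nat.mem_primeFactors.mp hp
        rcases (Nat.Prime.dvd_mul pp).mp pd with h | h
        · exact hsmall p pp (Or.inl h)
        · exact hsmall p pp (Or.inr (Or.inl h)))
    have hndm : ¬ ℓ ∣ m' := fun hd => absurd (hpr ℓ (Nat.mem_primeFactors.mpr
      ⟨hℓ, hd.mul_right n', by positivity⟩)) (lt_irrefl ℓ)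
    have hndn : ¬ ℓ ∣ n' := fun hd => absurd (hpr ℓ (Nat.mem_primeFactors.mpr
      ⟨hℓ, hd.mul_left m', by positivity⟩)) (lt_irrefl ℓ)
    refine ⟨ℓ ^ (k + 1) * m', ℓ * n', by positivity, by positivity, ?_, ?_⟩
    · intro p hp
      obtain ⟨pp, pd, -⟩ := Nat.mem_primeFactors.mp hp
      have hpd : p ∣ ℓ ^ (k + 2) * (m' * n') := by
        have h2 : (ℓ ^ (k + 1) * m') * (ℓ * n') = ℓ ^ (k + 2) * (m' * n') := by ring
        rwa [h2] at pd
      rcases (Nat.Prime.dvd_mul pp).mp hpd with h | h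
      · exact le_of_eq ((Nat.prime_dvd_prime_iff_eq pp hℓ).mp (pp.dvd_of_dvd_pow h))
      · exact (hpr p (Nat.mem_primeFactors.mpr ⟨pp, h, by positivity⟩)).le
    · rw [show (ℓ ^ (k + 1) * m') ^ 2 = ℓ ^ (2 * k + 2) * m' ^ 2 by ring,
        show (ℓ * n') ^ 2 = ℓ ^ (2 * 0 + 2) * n' ^ 2 by ring,
        Nat.totient_mul (hcop m' hndm _), Nat.totient_mul (hcop n' hndn _),
        htot k, htot 0, ← ha', ← hb', hαe, hk]
      zify [show 1 ≤ ℓ from by omega] at heq ⊢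
      linear_combination ((ℓ : ℤ) ^ (2 * k + 1 + β) * ((ℓ : ℤ) - 1)) * heq
  · -- e = 2k+1 : take m = ℓ^(k+1) m', n = n', with b₁ replaced by (ℓ-1) b₁
    obtain ⟨m', n', hm', hn', hpr, heq⟩ := H a₁ ((ℓ - 1) * b₁) ha₁pos
      (Nat.mul_pos (by omega) hb₁pos)
      (fun p hp => by
        obtain ⟨pp, pd, -⟩ := Nat.mem_primeFactors.mp hp
        rcases (Nat.Prime.dvd_mul pp).mp pd with h | h
        · exact hsmall p pp (Or.inl h)
        · rcases (Nat.Prime.dvd_mul pp).mp h with h | h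
          · exact hsmall p pp (Or.inr (Or.inr h))
          · exact hsmall p pp (Or.inr (Or.inl h)))
    have hndm : ¬ ℓ ∣ m' := fun hd => absurd (hpr ℓ (Nat.mem_primeFactors.mpr
      ⟨hℓ, hd.mul_right n', by positivity⟩)) (lt_irrefl ℓ)
    refine ⟨ℓ ^ (k + 1) * m', n', by positivity, hn', key (k + 1) m' n' hm' hn' hpr, ?_⟩
    rw [show (ℓ ^ (k + 1) * m') ^ 2 = ℓ ^ (2 * k + 2) * m' ^ 2 by ring,
      Nat.totient_mul (hcop m' hndm _), htot k, ← ha', ← hb', hαe, hk]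
    zify [show 1 ≤ ℓ from by omega] at heq ⊢
    linear_combination ((ℓ : ℤ) ^ (2 * k + 1 + β)) * heq

lemma stmt12_key : ∀ N a b : ℕ, 0 < a → 0 < b →
    (∀ p ∈ (a * b).primeFactors, p < N) →
    ∃ m n : ℕ, 0 < m ∧ 0 < n ∧ (∀ p ∈ (m * n).primeFactors, p < N) ∧
      Nat.totient (m ^ 2) * b = Nat.totient (n ^ 2) * a := by
  intro N
  induction N using Nat.strong_induction_on with
  | _ N IH =>
    intro a b ha hb hp
    by_cases h1 : a * b = 1
    · have ha1 : a = 1 := Nat.eq_one_of_mul_eq_one_right h1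
      have hb1 : b = 1 := Nat.eq_one_of_mul_eq_one_right (by rwa [mul_comm] at h1)
      exact ⟨1, 1, one_pos, one_pos, by simp, by rw [ha1, hb1]⟩
    · have hne : (a * b).primeFactors.Nonempty :=
        Nat.nonempty_primeFactors.mpr (by
          have : 0 < a * b := by positivity
          omega)
      set ℓ := (a * b).primeFactors.max' hne with hℓdef
      have hℓmem : ℓ ∈ (a * b).primeFactors := Finset.max'_mem _ hne
      have hℓp : ℓ.Prime := Nat.prime_of_mem_primeFactors hℓmem
      have hℓN : ℓ < N := hp ℓ hℓmem
      have hmax : ∀ p ∈ (a * b).primeFactors, p ≤ ℓ := fun p hp => Finset.le_max' _ p hp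
      have H : ∀ a b : ℕ, 0 < a → 0 < b → (∀ p ∈ (a * b).primeFactors, p < ℓ) →
          ∃ m n : ℕ, 0 < m ∧ 0 < n ∧ (∀ p ∈ (m * n).primeFactors, p < ℓ) ∧
            Nat.totient (m ^ 2) * b = Nat.totient (n ^ 2) * a :=
        fun a b ha hb hpr => IH ℓ hℓN a b ha hb hpr
      rcases le_total (b.factorization ℓ) (a.factorization ℓ) with hle | hle
      · obtain ⟨m, n, hm, hn, hpr, heq⟩ := stmt12_step ℓ hℓp H a b ha hb hmax hle
        exact ⟨m, n, hm, hn, fun p hp => lt_of_le_of_lt (hpr p hp) hℓN, heq⟩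
      · obtain ⟨m, n, hm, hn, hpr, heq⟩ := stmt12_step ℓ hℓp H b a hb ha
          (fun p hp => hmax p (by rwa [mul_comm a b])) hle
        exact ⟨n, m, hn, hm,
          fun p hp => lt_of_le_of_lt (hpr p (by rwa [mul_comm n m] at hp)) hℓN, heq.symm⟩

theorem stmt12 :
    {x : ℚ | ∃ m n : ℕ, 0 < m ∧ 0 < n ∧
        x = (Nat.totient (m ^ 2) : ℚ) / (Nat.totient (n ^ 2) : ℚ)} =
      {x : ℚ | 0 < x} := by
  ext x
  simp only [Set.mem_setOf_eq]
  constructor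
  · rintro ⟨m, n, hm, hn, rfl⟩
    have h1 : 0 < Nat.totient (m ^ 2) := Nat.totient_pos.mpr (by positivity)
    have h2 : 0 < Nat.totient (n ^ 2) := Nat.totient_pos.mpr (by positivity)
    positivity
  · intro hx
    set a := x.num.toNat with hadef
    set b := x.den with hbdef
    have hxnum : 0 < x.num := Rat.num_pos.mpr hx
    have ha : 0 < a := by rw [hadef]; omega
    have hb : 0 < b := x.pos
    obtain ⟨m, n, hm, hn, -, heq⟩ := stmt12_key (a * b + 1) a b ha hb
      (fun p hp => by
        obtain ⟨pp, pd, hne⟩ := Nat.mem_primeFactors.mp hp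
        have := Nat.le_of_dvd (by positivity) pd
        omega)
    refine ⟨m, n, hm, hn, ?_⟩
    have h2 : (0:ℚ) < (Nat.totient (n ^ 2) : ℚ) := by
      exact_mod_cast Nat.totient_pos.mpr (by positivity : 0 < n ^ 2)
    have hxab : x = (a : ℚ) / (b : ℚ) := by
      have hca : ((a : ℕ) : ℚ) = (x.num : ℚ) := by
        rw [hadef]
        exact_mod_cast congrArg (Int.cast : ℤ → ℚ) (Int.toNat_of_nonneg hxnum.le)
      rw [hca, hbdef]
      exact (Rat.num_div_den x).symm
    rw [hxab, div_eq_div_iff (by exact_mod_cast hb.ne' : (b:ℚ) ≠ 0) h2.ne']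
    have hnat : a * Nat.totient (n ^ 2) = Nat.totient (m ^ 2) * b := by
      rw [mul_comm a]; exact heq.symm
    exact_mod_cast hnat
end
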